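/- arXiv:2112.02874 — 2 statements merged into one kernel-verified Lean document; each statement's English description precedes it below -/
import Mathlib

section
/- Let α, β, v be real with v ≠ 0, α ∉ {β, β+v, β−v}, and let A = |f(α−β)|, B = |f(α−β−v)|, C = |f(α−β+v)| where f(x) = c·sin(Kπx)/x for a constant c ≠ 0 and positive integer K with Kv ∈ ℤ, and assume sin(Kπ(α−β)) ≠ 0. Define S₁ = {β + B v/(B + A), β + B v/(B − A)} (omitting elements where the denominator is zero) and S₂ = {β + C v/(−C + A), β + C v/(−C − A)} (omitting elements where the denominator is zero). Then α ∈ S₁ ∩ S₂. -/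
lemma abs_sin_sub_int_mul_pi (x : ℝ) (n : ℤ) :
    |Real.sin (x - n * Real.pi)| = |Real.sin x| := by
  have : Real.sin (x - n * Real.pi) = -Real.sin (n * Real.pi - x) := by
    rw [← Real.sin_neg]; ring_nf
  rw [this, Real.sin_int_mul_pi_sub, abs_neg, abs_neg, abs_mul]
  have h1 : |(-1 : ℝ) ^ n| = 1 := by
    rcases Int.even_or_odd n with he | ho
    · rw [he.neg_one_zpow, abs_one]
    · rw [ho.neg_one_zpow, abs_neg, abs_one]
  rw [h1, one_mul]

lemma key (s u v : ℝ) (hs : 0 < s) (hu : u ≠ 0) (huv : u - v ≠ 0) (hv : v ≠ 0) :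
    (s / |u - v| + s / |u| ≠ 0 ∧ u = (s / |u - v|) * v / (s / |u - v| + s / |u|)) ∨
    (s / |u - v| - s / |u| ≠ 0 ∧ u = (s / |u - v|) * v / (s / |u - v| - s / |u|)) := by
  have hsv : s * v ≠ 0 := mul_ne_zero hs.ne' hv
  rcases lt_or_gt_of_ne hu with hu' | hu' <;>
  rcases lt_or_gt_of_ne huv with huv' | huv'
  · -- u < 0, u - v < 0
    right
    rw [abs_of_neg hu', abs_of_neg huv']
    have d1 : -(u - v) ≠ 0 := by linarith
    have d2 : -u ≠ 0 := by linarith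
    have hrw : s / -(u - v) - s / -u = -(s * v) / (-(u - v) * -u) := by
      rw [div_sub_div _ _ d1 d2]; congr 1; ring
    have hD : -(s * v) / (-(u - v) * -u) ≠ 0 :=
      div_ne_zero (neg_ne_zero.mpr hsv) (mul_ne_zero d1 d2)
    refine ⟨by rw [hrw]; exact hD, ?_⟩
    rw [hrw, eq_div_iff hD, mul_div_assoc', div_mul_eq_mul_div, div_eq_div_iff (mul_ne_zero d1 d2) d1]
    ring
  · -- u < 0, u - v > 0
    left
    rw [abs_of_neg hu', abs_of_pos huv']
    have d1 : (u - v) ≠ 0 := huv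
    have d2 : -u ≠ 0 := by linarith
    have hrw : s / (u - v) + s / -u = -(s * v) / ((u - v) * -u) := by
      rw [div_add_div _ _ d1 d2]; congr 1; ring
    have hD : -(s * v) / ((u - v) * -u) ≠ 0 :=
      div_ne_zero (neg_ne_zero.mpr hsv) (mul_ne_zero d1 d2)
    refine ⟨by rw [hrw]; exact hD, ?_⟩
    rw [hrw, eq_div_iff hD, mul_div_assoc', div_mul_eq_mul_div, div_eq_div_iff (mul_ne_zero d1 d2) d1]
    ring
  · -- u > 0, u - v < 0
    left
    rw [abs_of_pos hu', abs_of_neg huv']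
    have d1 : -(u - v) ≠ 0 := by linarith
    have d2 : u ≠ 0 := hu
    have hrw : s / -(u - v) + s / u = (s * v) / (-(u - v) * u) := by
      rw [div_add_div _ _ d1 d2]; congr 1; ring
    have hD : (s * v) / (-(u - v) * u) ≠ 0 := div_ne_zero hsv (mul_ne_zero d1 d2)
    refine ⟨by rw [hrw]; exact hD, ?_⟩
    rw [hrw, eq_div_iff hD, mul_div_assoc', div_mul_eq_mul_div, div_eq_div_iff (mul_ne_zero d1 d2) d1]
    ring
  · -- u > 0, u - v > 0
    right
    rw [abs_of_pos hu', abs_of_pos huv']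
    have d1 : (u - v) ≠ 0 := huv
    have d2 : u ≠ 0 := hu
    have hrw : s / (u - v) - s / u = (s * v) / ((u - v) * u) := by
      rw [div_sub_div _ _ d1 d2]; congr 1; ring
    have hD : (s * v) / ((u - v) * u) ≠ 0 := div_ne_zero hsv (mul_ne_zero d1 d2)
    refine ⟨by rw [hrw]; exact hD, ?_⟩
    rw [hrw, eq_div_iff hD, mul_div_assoc', div_mul_eq_mul_div, div_eq_div_iff (mul_ne_zero d1 d2) d1]
    ring

/-- With three pilot measurements (parameters `β`, `β+v`, `β−v`), the true direction
cosine `α` lies in the intersection of the two candidate-solution sets. -/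
theorem stmt_8 (α β v c : ℝ) (K : ℕ) (hK : 0 < K) (hv : v ≠ 0) (hc : c ≠ 0)
    (n : ℤ) (hn : (K : ℝ) * v = (n : ℝ))
    (h1 : α ≠ β) (h2 : α ≠ β + v) (h3 : α ≠ β - v)
    (f : ℝ → ℝ) (hf : ∀ x : ℝ, x ≠ 0 → f x = c * Real.sin ((K : ℝ) * Real.pi * x) / x)
    (hs : Real.sin ((K : ℝ) * Real.pi * (α - β)) ≠ 0)
    (A B C : ℝ) (hA : A = |f (α - β)|) (hB : B = |f (α - β - v)|)
    (hC : C = |f (α - β + v)|)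
    (S₁ S₂ : Set ℝ)
    (hS₁ : S₁ = {x : ℝ | (B + A ≠ 0 ∧ x = β + B * v / (B + A))
      ∨ (B - A ≠ 0 ∧ x = β + B * v / (B - A))})
    (hS₂ : S₂ = {x : ℝ | (-C + A ≠ 0 ∧ x = β + C * v / (-C + A))
      ∨ (-C - A ≠ 0 ∧ x = β + C * v / (-C - A))}) :
    α ∈ S₁ ∩ S₂ := by
  set u := α - β with hu_def
  have hu : u ≠ 0 := sub_ne_zero.mpr h1
  have huv : u - v ≠ 0 := by
    simp only [hu_def]; intro h; apply h2; linarith [sub_eq_zero.mp h]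
  have huv' : u - (-v) ≠ 0 := by
    simp only [hu_def]; intro h; apply h3
    have := sub_eq_zero.mp h; linarith
  set s := |c| * |Real.sin ((K : ℝ) * Real.pi * u)| with hs_def
  have hspos : 0 < s := mul_pos (abs_pos.mpr hc) (abs_pos.mpr hs)
  have hA' : A = s / |u| := by
    rw [hA, hf u hu, abs_div, abs_mul, hs_def]
  have hsinB : |Real.sin ((K : ℝ) * Real.pi * (u - v))| = |Real.sin ((K : ℝ) * Real.pi * u)| := by
    have : (K : ℝ) * Real.pi * (u - v) = (K : ℝ) * Real.pi * u - n * Real.pi := by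
      have : (K : ℝ) * Real.pi * v = n * Real.pi := by rw [← hn]; ring
      linarith [this]
    rw [this, abs_sin_sub_int_mul_pi]
  have hB' : B = s / |u - v| := by
    rw [hB, hf _ huv, abs_div, abs_mul, hs_def, hsinB]
  have hsinC : |Real.sin ((K : ℝ) * Real.pi * (u + v))| = |Real.sin ((K : ℝ) * Real.pi * u)| := by
    have heq : (K : ℝ) * Real.pi * (u + v) = (K : ℝ) * Real.pi * u - (-n : ℤ) * Real.pi := by
      push_cast
      have : (K : ℝ) * Real.pi * v = n * Real.pi := by rw [← hn]; ring
      linarith [this]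
    rw [heq, abs_sin_sub_int_mul_pi]
  have hC' : C = s / |u - (-v)| := by
    have : α - β + v = u - (-v) := by ring
    rw [hC, this, hf _ huv', abs_div, abs_mul, hs_def]
    congr 1
    rw [show u - (-v) = u + v by ring, hsinC]
  constructor
  · rw [hS₁]
    have h := key s u v hspos hu huv hv
    rw [← hA', ← hB'] at h
    rcases h with ⟨h1', h2'⟩ | ⟨h1', h2'⟩
    · left; exact ⟨h1', by simp only [hu_def] at h2'; linarith⟩
    · right; exact ⟨h1', by simp only [hu_def] at h2'; linarith⟩
  · rw [hS₂]
    have h := key s u (-v) hspos hu huv' (neg_ne_zero.mpr hv)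
    rw [← hA', ← hC'] at h
    rcases h with ⟨h1', h2'⟩ | ⟨h1', h2'⟩
    · right
      refine ⟨by intro h; apply h1'; linarith, ?_⟩
      rw [show C * v / (-C - A) = C * -v / (C + A) by
        rw [show -C - A = -(C + A) by ring, div_neg, mul_neg, neg_div]]
      simp only [hu_def] at h2'; linarith
    · left
      refine ⟨by intro h; apply h1'; linarith, ?_⟩
      rw [show C * v / (-C + A) = C * -v / (C - A) by
        rw [show -C + A = -(C - A) by ring, div_neg, mul_neg, neg_div]]
      simp only [hu_def] at h2'; linarith
end

section
/- Let d₀ > 0, d_r > 0 with d_r ≤ d₀/2, and α₁, α₂ ∈ ℝ with α₁² + α₂² ≤ 1, and let U = (d₀α₁, d₀α₂, d₀√(1−α₁²−α₂²)). Then |‖U − (d_r,0,0)‖ − (d₀ − d_r α₁)| ≤ d_r²/d₀. -/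
/-- Quantitative version of `d₂ ≈ d₀ − d_r α₁` for the distance from the user to an
element displaced by `d_r` along the `x`-axis. -/
theorem stmt_14 (d₀ dr α₁ α₂ : ℝ) (hd₀ : 0 < d₀) (hdr : 0 < dr)
    (hdr2 : dr ≤ d₀ / 2) (hα : α₁ ^ 2 + α₂ ^ 2 ≤ 1) :
    |Real.sqrt ((d₀ * α₁ - dr) ^ 2 + (d₀ * α₂) ^ 2
        + (d₀ * Real.sqrt (1 - α₁ ^ 2 - α₂ ^ 2)) ^ 2)
      - (d₀ - dr * α₁)| ≤ dr ^ 2 / d₀ := by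
  have hs : 0 ≤ 1 - α₁ ^ 2 - α₂ ^ 2 := by nlinarith
  have hsq : Real.sqrt (1 - α₁ ^ 2 - α₂ ^ 2) ^ 2 = 1 - α₁ ^ 2 - α₂ ^ 2 :=
    Real.sq_sqrt hs
  have hα₁ : α₁ ≤ 1 := by nlinarith [sq_nonneg α₂]
  have hA : d₀ / 2 ≤ d₀ - dr * α₁ := by nlinarith
  have hX : (d₀ * α₁ - dr) ^ 2 + (d₀ * α₂) ^ 2
      + (d₀ * Real.sqrt (1 - α₁ ^ 2 - α₂ ^ 2)) ^ 2
      = (d₀ - dr * α₁) ^ 2 + dr ^ 2 * (1 - α₁ ^ 2) := by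
    rw [mul_pow, mul_pow d₀, hsq]; ring
  rw [hX, abs_le]
  have hA0 : (0:ℝ) ≤ d₀ - dr * α₁ := by linarith
  set e := dr ^ 2 / d₀ with he
  have he0 : 0 ≤ e := by positivity
  have hed : e * d₀ = dr ^ 2 := div_mul_cancel₀ _ (ne_of_gt hd₀)
  constructor
  · have h1 : d₀ - dr * α₁ ≤ Real.sqrt ((d₀ - dr * α₁) ^ 2 + dr ^ 2 * (1 - α₁ ^ 2)) := by
      rw [Real.le_sqrt hA0 (by nlinarith [sq_nonneg α₁])]
      nlinarith [sq_nonneg α₁]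
    linarith
  · have h1 : Real.sqrt ((d₀ - dr * α₁) ^ 2 + dr ^ 2 * (1 - α₁ ^ 2))
        ≤ d₀ - dr * α₁ + e :=
      calc Real.sqrt ((d₀ - dr * α₁) ^ 2 + dr ^ 2 * (1 - α₁ ^ 2))
          ≤ Real.sqrt ((d₀ - dr * α₁ + e) ^ 2) := by
            apply Real.sqrt_le_sqrt
            nlinarith [sq_nonneg e, sq_nonneg α₁, mul_pos hdr hdr]
        _ = d₀ - dr * α₁ + e := Real.sqrt_sq (by linarith)
    linarith
end
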